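/- arXiv:1908.07996 — 2 statements merged into one kernel-verified Lean document; each statement's English description precedes it below -/
import Mathlib

section
/- Let a, ã, c > 0 with a < ã. Define ω₁ = (1/2)√(ã² − a²) + √(c + (ã² − a²)/4), ω₂ = −(1/2)√(ã² − a²) + √(c + (ã² − a²)/4), and for n ∈ ℕ, τ₁ₙ = (arccos(−a/ã) + 2πn)/ω₁ and τ₂ₙ = (−arccos(−a/ã) + 2π(n+1))/ω₂. Then for every n ∈ ℕ, iω₁ is a root of λ² + (a + ã e^{−λ τ₁ₙ})λ + c = 0 and iω₂ is a root of λ² + (a + ã e^{−λ τ₂ₙ})λ + c = 0. -/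
/-!
With `s = √(ã² - a²)`, the frequencies `ω₁` and `-ω₂` are the two roots of `x² - s x - c = 0`,
and `θ = ± arccos (-a/ã)` (mod `2π`) satisfy `ã cos θ = -a`, `ã sin θ = ± s`. Splitting
`Δ_τ(iω) = c - ω² + ã ω sin(ωτ) + i ω (a + ã cos(ωτ))` into real and imaginary parts, both vanish
when `ωτ = θ`.
-/

open Real

noncomputable def delayCharFun (a atil c τ : ℝ) (z : ℂ) : ℂ :=
  z ^ 2 + ((a : ℂ) + (atil : ℂ) * Complex.exp (-z * τ)) * z + (c : ℂ)

theorem delayCharFun_I_mul_div_eq_zero {a atil c ω θ : ℝ} (hω : ω ≠ 0)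
    (hcos : atil * cos θ = -a) (hsin : atil * sin θ * ω = ω ^ 2 - c) :
    delayCharFun a atil c (θ / ω) (Complex.I * ω) = 0 := by
  have hω' : (ω : ℂ) ≠ 0 := mod_cast hω
  have hexp : -(Complex.I * ω) * ((θ / ω : ℝ) : ℂ) = ((-θ : ℝ) : ℂ) * Complex.I := by
    push_cast
    field_simp
  have hcos' : (atil : ℂ) * (cos θ : ℂ) = -a := mod_cast hcos
  have hsin' : (atil : ℂ) * (sin θ : ℂ) * ω = (ω : ℂ) ^ 2 - c := mod_cast hsin
  rw [delayCharFun, hexp, Complex.exp_mul_I, ← Complex.ofReal_cos, ← Complex.ofReal_sin,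
    cos_neg, sin_neg, Complex.ofReal_neg]
  linear_combination Complex.I * ω * hcos' - Complex.I ^ 2 * hsin' + c * Complex.I_sq

section Frequencies

variable {c d : ℝ}

theorem half_sqrt_add_sqrt_sq_sub_eq (hd : 0 ≤ d) (hcd : 0 ≤ c + d / 4) :
    ((1/2) * √d + √(c + d / 4)) ^ 2 - c = √d * ((1/2) * √d + √(c + d / 4)) := by
  linear_combination -(Real.sq_sqrt hd) / 4 + Real.sq_sqrt hcd

theorem neg_half_sqrt_add_sqrt_sq_sub_eq (hd : 0 ≤ d) (hcd : 0 ≤ c + d / 4) :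
    (-(1/2) * √d + √(c + d / 4)) ^ 2 - c = -√d * (-(1/2) * √d + √(c + d / 4)) := by
  linear_combination -(Real.sq_sqrt hd) / 4 + Real.sq_sqrt hcd

theorem neg_half_sqrt_add_sqrt_pos (hd : 0 ≤ d) (hc : 0 < c) :
    0 < -(1/2) * √d + √(c + d / 4) := by
  have : (1/2) * √d < √(c + d / 4) := by
    rw [Real.lt_sqrt (by positivity), mul_pow, Real.sq_sqrt hd]
    linarith
  linarith

end Frequencies

theorem mul_sin_arccos_neg_div {a atil : ℝ} (hatil : 0 < atil) :
    atil * sin (arccos (-(a / atil))) = √(atil ^ 2 - a ^ 2) := by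
  calc atil * sin (arccos (-(a / atil)))
      = √(atil ^ 2 * (1 - (-(a / atil)) ^ 2)) := by
        rw [sin_arccos, Real.sqrt_mul (sq_nonneg atil), Real.sqrt_sq hatil.le]
    _ = √(atil ^ 2 - a ^ 2) := by
        congr 1
        field_simp

theorem mul_cos_arccos_neg_div {a atil : ℝ} (hatil : 0 < atil) (ha : |a| ≤ atil) :
    atil * cos (arccos (-(a / atil))) = -a := by
  have hdiv : |a / atil| ≤ 1 := by
    rwa [abs_div, abs_of_pos hatil, div_le_one hatil]
  rw [cos_arccos (by linarith [(abs_le.mp hdiv).2]) (by linarith [(abs_le.mp hdiv).1])]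
  field_simp

theorem imaginary_roots_at_crossing_delays
    (a atil c : ℝ) (ha : 0 < a) (haa : a < atil) (hc : 0 < c) :
    let ω₁ := (1/2) * Real.sqrt (atil^2 - a^2) + Real.sqrt (c + (atil^2 - a^2)/4)
    let ω₂ := -(1/2) * Real.sqrt (atil^2 - a^2) + Real.sqrt (c + (atil^2 - a^2)/4)
    ∀ n : ℕ,
      (let τ := (Real.arccos (-(a/atil)) + 2 * π * n) / ω₁
       (Complex.I * ω₁)^2
        + ((a : ℂ) + (atil : ℂ) * Complex.exp (-(Complex.I * ω₁) * τ)) * (Complex.I * ω₁)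
        + (c : ℂ) = 0)
      ∧ (let τ := (-Real.arccos (-(a/atil)) + 2 * π * (n+1)) / ω₂
       (Complex.I * ω₂)^2
        + ((a : ℂ) + (atil : ℂ) * Complex.exp (-(Complex.I * ω₂) * τ)) * (Complex.I * ω₂)
        + (c : ℂ) = 0) := by
  intro ω₁ ω₂ n
  have hatil : 0 < atil := ha.trans haa
  have habs : |a| ≤ atil := abs_le.mpr ⟨by linarith, haa.le⟩
  have hd : 0 ≤ atil ^ 2 - a ^ 2 := by nlinarith
  have hcd : 0 ≤ c + (atil ^ 2 - a ^ 2) / 4 := by positivity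
  have hω₁ : 0 < ω₁ := by positivity
  have hω₂ : 0 < ω₂ := neg_half_sqrt_add_sqrt_pos hd hc
  refine ⟨delayCharFun_I_mul_div_eq_zero hω₁.ne' ?_ ?_,
    delayCharFun_I_mul_div_eq_zero hω₂.ne' ?_ ?_⟩
  · rw [mul_comm (2 * π), cos_add_nat_mul_two_pi, mul_cos_arccos_neg_div hatil habs]
  · rw [mul_comm (2 * π), sin_add_nat_mul_two_pi, mul_sin_arccos_neg_div hatil]
    exact (half_sqrt_add_sqrt_sq_sub_eq hd hcd).symm
  · rw [← Nat.cast_succ, mul_comm (2 * π), cos_add_nat_mul_two_pi, cos_neg,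
      mul_cos_arccos_neg_div hatil habs]
  · rw [← Nat.cast_succ, mul_comm (2 * π), sin_add_nat_mul_two_pi, sin_neg, mul_neg,
      mul_sin_arccos_neg_div hatil]
    exact (neg_half_sqrt_add_sqrt_sq_sub_eq hd hcd).symm
end

section
/- Let a, ã > 0 with a = ã and c > 0. Then the purely imaginary characteristic roots λ = iω, ω > 0, of λ² + (a + ã e^{−λτ})λ + c = 0 occur exactly at ω = √c and τ = τₙ := c^{−1/2} π (2n + 1), n ∈ ℕ. That is, for ω > 0 and τ > 0, iω is a root if and only if ω = √c and τ ∈ {π(2n+1)/√c : n ∈ ℕ}. -/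
open Real

theorem bautin_crossing_characterization
    (a atil c : ℝ) (ha : 0 < a) (hatil : 0 < atil) (heq : a = atil) (hc : 0 < c)
    (ω τ : ℝ) (hω : 0 < ω) (hτ : 0 < τ) :
    ((Complex.I * ω)^2
        + ((a : ℂ) + (atil : ℂ) * Complex.exp (-(Complex.I * ω) * τ)) * (Complex.I * ω)
        + (c : ℂ) = 0)
    ↔ (ω = Real.sqrt c ∧ ∃ n : ℕ, τ = π * (2 * n + 1) / Real.sqrt c) := by
  subst heq
  have hsc : 0 < Real.sqrt c := Real.sqrt_pos.mpr hc
  have key : (-(Complex.I * ω) * τ) = ((-(ω*τ) : ℝ) : ℂ) * Complex.I := by push_cast; ring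
  rw [key, Complex.exp_mul_I, ← Complex.ofReal_cos, ← Complex.ofReal_sin, Complex.ext_iff]
  simp only [Complex.add_re, Complex.add_im, Complex.mul_re, Complex.mul_im, Complex.I_re,
    Complex.I_im, Complex.ofReal_re, Complex.ofReal_im, Real.cos_neg, Real.sin_neg,
    Complex.zero_re, Complex.zero_im, pow_two]
  ring_nf
  constructor
  · rintro ⟨h1, h2⟩
    have hcos : Real.cos (ω * τ) = -1 := by
      have haω : 0 < a * ω := mul_pos hatil hω
      nlinarith
    have hsin : Real.sin (ω * τ) = 0 := by
      have := Real.sin_sq_add_cos_sq (ω * τ)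
      nlinarith
    have hω2 : ω ^ 2 = c := by
      rw [hsin, mul_zero] at h1; linarith
    have hωs : ω = Real.sqrt c := by
      rw [← hω2, Real.sqrt_sq hω.le]
    refine ⟨hωs, ?_⟩
    obtain ⟨k, hk⟩ := Real.cos_eq_neg_one_iff.mp hcos
    have hkpos : 0 ≤ k := by
      by_contra hneg
      push_neg at hneg
      have hk0 : k + 1 ≤ 0 := Int.lt_iff_add_one_le.mp hneg
      have hk1 : (k : ℝ) + 1 ≤ 0 := by exact_mod_cast hk0
      have : ω * τ ≤ -π := by nlinarith [Real.pi_pos]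
      nlinarith [Real.pi_pos, mul_pos hω hτ]
    refine ⟨k.toNat, ?_⟩
    have hkn : ((k.toNat : ℕ) : ℝ) = (k : ℝ) := by
      exact_mod_cast congrArg (Int.cast : ℤ → ℝ) (Int.toNat_of_nonneg hkpos)
    have hτeq : τ = (π + (k:ℝ) * (2*π)) / ω := by
      field_simp
      linarith [hk]
    rw [hkn, ← hωs, hτeq]
    field_simp
    ring
  · rintro ⟨hωs, n, hτn⟩
    have hωτ : ω * τ = π + n * (2 * π) := by
      rw [hωs, hτn]
      field_simp
      ring
    have hcos : Real.cos (ω * τ) = -1 := by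
      apply Real.cos_eq_neg_one_iff.mpr
      exact ⟨(n : ℤ), by push_cast [hωτ]; ring⟩
    have hsin : Real.sin (ω * τ) = 0 := by
      have := Real.sin_sq_add_cos_sq (ω * τ)
      rw [hωτ, Real.sin_add_nat_mul_two_pi, Real.sin_pi]
    have hω2 : ω ^ 2 = c := by
      rw [hωs, Real.sq_sqrt hc.le]
    constructor
    · rw [hsin, mul_zero]; linarith
    · rw [hcos]; ring
end
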